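/- Let V, V̂ be separable Hilbert spaces such that the embedding V̂ ⊂ V is Hilbert–Schmidt with norm c_{V,V̂}, and let v ∈ V ⊗ V be fixed (V ⊗ V the Hilbert space tensor product). Then the map L₂(V ⊗ V, V̂) → V, Ẽ ↦ Ẽv, is Hilbert–Schmidt with norm at most c_{V,V̂} ‖v‖. -/

import Mathlib

/-! On the basis vector `Ẽ_{i,(j,k)}` the map takes the value `⟪g_{jk}, v⟫ • J fᵢ`, so the sum of
squares factors as `(∑ᵢ ‖J fᵢ‖²) · (∑_{jk} ⟪g_{jk}, v⟫²) = c² ‖v‖²` by Parseval's identity. -/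

open scoped InnerProductSpace

/- Proved in `ℝ≥0∞`, where it always holds: `toReal` is multiplicative and sends `∞` to `0`,
the junk value of a divergent real `tsum`. -/
theorem tsum_mul_tsum_of_nonneg {α β : Type*} {f : α → ℝ} {g : β → ℝ} (hf : 0 ≤ f) (hg : 0 ≤ g) :
    ∑' p : α × β, f p.1 * g p.2 = (∑' a, f a) * ∑' b, g b := by
  have hf' : ∀ a, (ENNReal.ofReal (f a)).toReal = f a := fun a => ENNReal.toReal_ofReal (hf a)
  have hg' : ∀ b, (ENNReal.ofReal (g b)).toReal = g b := fun b => ENNReal.toReal_ofReal (hg b)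
  calc ∑' p : α × β, f p.1 * g p.2
      = (∑' p : α × β, ENNReal.ofReal (f p.1) * ENNReal.ofReal (g p.2)).toReal := by
        rw [ENNReal.tsum_toReal_eq (fun p => by finiteness)]
        simp only [ENNReal.toReal_mul, hf', hg']
    _ = ((∑' a, ENNReal.ofReal (f a)) * ∑' b, ENNReal.ofReal (g b)).toReal := by
        rw [ENNReal.tsum_prod', ← ENNReal.tsum_mul_right]
        simp only [ENNReal.tsum_mul_left]
    _ = (∑' a, f a) * ∑' b, g b := by
        rw [ENNReal.toReal_mul, ENNReal.tsum_toReal_eq (fun a => by finiteness),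
          ENNReal.tsum_toReal_eq (fun b => by finiteness)]
        simp only [hf', hg']

theorem HilbertBasis.hasSum_norm_inner_sq {ι 𝕜 E : Type*} [RCLike 𝕜] [NormedAddCommGroup E]
    [InnerProductSpace 𝕜 E] (b : HilbertBasis ι 𝕜 E) (x : E) :
    HasSum (fun i => ‖⟪b i, x⟫_𝕜‖ ^ 2) (‖x‖ ^ 2) := by
  have h := b.hasSum_inner_mul_inner x x
  rw [inner_self_eq_norm_sq_to_K] at h
  simp only [← inner_conj_symm x (b _), RCLike.conj_mul] at h
  exact_mod_cast h

/-- `W` stands for `V ⊗ V`, and the index `(i, (j, k))` labels the Hilbert basis vector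
`Ẽ_{i,(j,k)} = ⟪g_{jk}, ·⟫ • fᵢ` of `L₂(W, V̂)`, so the left side is the squared Hilbert–Schmidt
norm of `Ẽ ↦ J (Ẽ v)`. -/
theorem stmt_13_general {V Vh W : Type*} [NormedAddCommGroup V] [InnerProductSpace ℝ V]
    [NormedAddCommGroup Vh] [InnerProductSpace ℝ Vh]
    [NormedAddCommGroup W] [InnerProductSpace ℝ W]
    (f : HilbertBasis ℕ ℝ Vh) (g : HilbertBasis (ℕ × ℕ) ℝ W)
    (J : Vh →L[ℝ] V) (c : ℝ) (hJ : ∑' i, ‖J (f i)‖ ^ 2 = c ^ 2)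
    (v : W) :
    ∑' p : ℕ × (ℕ × ℕ), ‖J (((innerSL ℝ (g p.2)).smulRight (f p.1)) v)‖ ^ 2
      ≤ (c * ‖v‖) ^ 2 := by
  refine le_of_eq ?_
  calc ∑' p : ℕ × (ℕ × ℕ), ‖J (((innerSL ℝ (g p.2)).smulRight (f p.1)) v)‖ ^ 2
      = ∑' p : ℕ × (ℕ × ℕ), ‖J (f p.1)‖ ^ 2 * ‖⟪g p.2, v⟫_ℝ‖ ^ 2 := by
        simp only [ContinuousLinearMap.smulRight_apply, innerSL_apply_apply, map_smul, norm_smul,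
          mul_pow, mul_comm]
    _ = (∑' i, ‖J (f i)‖ ^ 2) * ∑' q, ‖⟪g q, v⟫_ℝ‖ ^ 2 :=
        tsum_mul_tsum_of_nonneg (f := fun i => ‖J (f i)‖ ^ 2) (g := fun q => ‖⟪g q, v⟫_ℝ‖ ^ 2)
          (fun _ => sq_nonneg _) (fun _ => sq_nonneg _)
    _ = (c * ‖v‖) ^ 2 := by rw [hJ, (g.hasSum_norm_inner_sq v).tsum_eq, mul_pow]

/-- Let V, V̂ be separable Hilbert spaces with the embedding J : V̂ → V Hilbert–Schmidt of HS
norm c, and let W (representing the Hilbert tensor product V ⊗ V) be a Hilbert space with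
orthonormal basis (g_{jk})_{(j,k)∈ℕ×ℕ}. Fix v ∈ W. Then the map L₂(W,V̂) → V, Ẽ ↦ J(Ẽ v),
is Hilbert–Schmidt with norm at most c‖v‖: evaluated on the orthonormal basis
Ẽ_{i,(j,k)} = ⟪g_{jk},·⟫ fᵢ of L₂(W,V̂), the squares sum to at most (c‖v‖)². -/
theorem stmt_13 {V Vh W : Type*} [NormedAddCommGroup V] [InnerProductSpace ℝ V] [CompleteSpace V]
    [NormedAddCommGroup Vh] [InnerProductSpace ℝ Vh] [CompleteSpace Vh]
    [NormedAddCommGroup W] [InnerProductSpace ℝ W] [CompleteSpace W]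
    (f : HilbertBasis ℕ ℝ Vh) (g : HilbertBasis (ℕ × ℕ) ℝ W)
    (J : Vh →L[ℝ] V) (c : ℝ) (hc0 : 0 ≤ c) (hJ : ∑' i, ‖J (f i)‖ ^ 2 = c ^ 2)
    (v : W) :
    ∑' p : ℕ × (ℕ × ℕ), ‖J (((innerSL ℝ (g p.2)).smulRight (f p.1)) v)‖ ^ 2
      ≤ (c * ‖v‖) ^ 2 :=
  stmt_13_general f g J c hJ v
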